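/- arXiv:2402.16799 — 2 statements merged into one kernel-verified Lean document; each statement's English description precedes it below -/
import Mathlib

section
/- Let x : I → ℝ^d be a smooth immersed curve with τ = x_ρ/|x_ρ|, P = Id − τ⊗τ, y = x_ρρ/|x_ρ|² and κ = Py. Then ∇_s² κ = P y_ss − 2(τ·y_s) Py − |y|² Py + 2(τ·y)² Py − (τ·y) P y_s, where φ_s = φ_ρ/|x_ρ| and ∇_s φ = P φ_s. -/
open scoped RealInnerProductSpace

/-- For a smooth immersed curve `x` with `τ = x_ρ/|x_ρ|`, `P = Id − τ⊗τ`,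
`y = x_ρρ/|x_ρ|²`, `κ = Py`, the second normal arclength derivative of the
curvature vector satisfies
`∇_s² κ = P y_ss − 2(τ·y_s) Py − |y|² Py + 2(τ·y)² Py − (τ·y) P y_s`,
where `φ_s = φ_ρ/|x_ρ|` and `∇_s φ = P φ_s`. -/
theorem stmt5 (d : ℕ) (x τ y κ ys yss κs nsκ nsκs ns2κ : ℝ → EuclideanSpace ℝ (Fin d))
    (hx : ContDiff ℝ (⊤ : ℕ∞) x)
    (hreg : ∀ ρ, 0 < ‖deriv x ρ‖)
    (hτ : ∀ ρ, τ ρ = ‖deriv x ρ‖⁻¹ • deriv x ρ)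
    (hy : ∀ ρ, y ρ = (‖deriv x ρ‖ ^ 2)⁻¹ • deriv (deriv x) ρ)
    (hκ : ∀ ρ, κ ρ = y ρ - ⟪τ ρ, y ρ⟫ • τ ρ)
    (hys : ∀ ρ, ys ρ = ‖deriv x ρ‖⁻¹ • deriv y ρ)
    (hyss : ∀ ρ, yss ρ = ‖deriv x ρ‖⁻¹ • deriv ys ρ)
    (hκs : ∀ ρ, κs ρ = ‖deriv x ρ‖⁻¹ • deriv κ ρ)
    (hnsκ : ∀ ρ, nsκ ρ = κs ρ - ⟪τ ρ, κs ρ⟫ • τ ρ)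
    (hnsκs : ∀ ρ, nsκs ρ = ‖deriv x ρ‖⁻¹ • deriv nsκ ρ)
    (hns2κ : ∀ ρ, ns2κ ρ = nsκs ρ - ⟪τ ρ, nsκs ρ⟫ • τ ρ) :
    ∀ ρ, ns2κ ρ =
      (yss ρ - ⟪τ ρ, yss ρ⟫ • τ ρ)
      - (2 * ⟪τ ρ, ys ρ⟫) • (y ρ - ⟪τ ρ, y ρ⟫ • τ ρ)
      - (‖y ρ‖ ^ 2) • (y ρ - ⟪τ ρ, y ρ⟫ • τ ρ)
      + (2 * ⟪τ ρ, y ρ⟫ ^ 2) • (y ρ - ⟪τ ρ, y ρ⟫ • τ ρ)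
      - ⟪τ ρ, y ρ⟫ • (ys ρ - ⟪τ ρ, ys ρ⟫ • τ ρ) := by
  have hle : ((⊤ : ℕ∞) : WithTop ℕ∞) ≠ 0 := by simp
  have hNne : ∀ t, ‖deriv x t‖ ≠ 0 := fun t => (hreg t).ne'
  have hne : ∀ t, deriv x t ≠ 0 := fun t => norm_pos_iff.mp (hreg t)
  have hx' : ContDiff ℝ ((⊤ : ℕ∞) : WithTop ℕ∞) x := hx.of_le (by simp)
  have hx1 : ContDiff ℝ ((⊤ : ℕ∞) : WithTop ℕ∞) (deriv x) :=
    (contDiff_infty_iff_deriv.mp hx').2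
  have hx2 : ContDiff ℝ ((⊤ : ℕ∞) : WithTop ℕ∞) (deriv (deriv x)) :=
    (contDiff_infty_iff_deriv.mp hx1).2
  have hNc : ContDiff ℝ ((⊤ : ℕ∞) : WithTop ℕ∞) (fun t => ‖deriv x t‖) := hx1.norm ℝ hne
  have hNic : ContDiff ℝ ((⊤ : ℕ∞) : WithTop ℕ∞) (fun t => ‖deriv x t‖⁻¹) := hNc.inv hNne
  have hτc : ContDiff ℝ ((⊤ : ℕ∞) : WithTop ℕ∞) τ := by
    rw [funext hτ]; exact hNic.smul hx1
  have hyc : ContDiff ℝ ((⊤ : ℕ∞) : WithTop ℕ∞) y := by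
    rw [funext hy]
    exact ((hNc.pow 2).inv fun t => pow_ne_zero 2 (hNne t)).smul hx2
  have hκc : ContDiff ℝ ((⊤ : ℕ∞) : WithTop ℕ∞) κ := by
    rw [funext hκ]; exact hyc.sub ((hτc.inner ℝ hyc).smul hτc)
  have hy1 : ContDiff ℝ ((⊤ : ℕ∞) : WithTop ℕ∞) (deriv y) :=
    (contDiff_infty_iff_deriv.mp hyc).2
  have hysc : ContDiff ℝ ((⊤ : ℕ∞) : WithTop ℕ∞) ys := by
    rw [funext hys]; exact hNic.smul hy1
  -- basic HasDerivAt facts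
  have Hx1 : ∀ t, HasDerivAt x (deriv x t) t :=
    fun t => (hx'.differentiable hle t).hasDerivAt
  have Hx2 : ∀ t, HasDerivAt (deriv x) (deriv (deriv x) t) t :=
    fun t => (hx1.differentiable hle t).hasDerivAt
  -- pointwise identities
  have hx1τ : ∀ t, deriv x t = ‖deriv x t‖ • τ t := fun t => by
    rw [hτ t, smul_inv_smul₀ (hNne t)]
  have hx2y : ∀ t, deriv (deriv x) t = (‖deriv x t‖ ^ 2) • y t := fun t => by
    rw [hy t, smul_inv_smul₀ (pow_ne_zero 2 (hNne t))]
  have hτnorm : ∀ t, ‖τ t‖ = 1 := by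
    intro t
    rw [hτ t, norm_smul, norm_inv, norm_norm, inv_mul_cancel₀ (hNne t)]
  -- derivative of the norm
  have HN : ∀ t, HasDerivAt (fun u => ‖deriv x u‖) (‖deriv x t‖ ^ 2 * ⟪τ t, y t⟫) t := by
    intro t
    have h1 : HasDerivAt (fun u => ⟪deriv x u, deriv x u⟫)
        (⟪deriv x t, deriv (deriv x) t⟫ + ⟪deriv (deriv x) t, deriv x t⟫) t :=
      HasDerivAt.inner ℝ (Hx2 t) (Hx2 t)
    have hpos : (0 : ℝ) < ⟪deriv x t, deriv x t⟫ := by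
      rw [real_inner_self_eq_norm_sq]
      have := hreg t; positivity
    have h2 := (Real.hasDerivAt_sqrt hpos.ne').comp t h1
    have heq : (fun u => Real.sqrt ⟪deriv x u, deriv x u⟫) = fun u => ‖deriv x u‖ := by
      funext u; rw [real_inner_self_eq_norm_sq, Real.sqrt_sq (norm_nonneg _)]
    have h3 : HasDerivAt (fun u => ‖deriv x u‖)
        (1 / (2 * Real.sqrt ⟪deriv x t, deriv x t⟫) *
          (⟪deriv x t, deriv (deriv x) t⟫ + ⟪deriv (deriv x) t, deriv x t⟫)) t := by
      rw [← heq]; exact h2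
    convert h3 using 1
    rw [real_inner_self_eq_norm_sq, Real.sqrt_sq (norm_nonneg _), hτ t, hy t]
    simp only [real_inner_smul_left, real_inner_smul_right]
    rw [real_inner_comm (deriv (deriv x) t) (deriv x t)]
    field_simp [hNne t]
    ring
  -- derivative of τ
  have Hτd : ∀ t, HasDerivAt τ (‖deriv x t‖ • κ t) t := by
    intro t
    have h := ((HN t).inv (hNne t)).smul (Hx2 t)
    have h' : HasDerivAt τ
        (‖deriv x t‖⁻¹ • deriv (deriv x) t +
          (-(‖deriv x t‖ ^ 2 * ⟪τ t, y t⟫) / ‖deriv x t‖ ^ 2) • deriv x t) t :=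
      h.congr_of_eventuallyEq (Filter.Eventually.of_forall hτ)
    convert h' using 1
    rw [hx2y t, hx1τ t, hκ t]
    match_scalars <;> field_simp [hNne t, norm_smul, norm_norm, hτnorm t] <;>
      simp -failIfUnchanged only [norm_smul, norm_norm, hτnorm t, mul_one] <;> ring
  -- derivatives of y, ys, κ from the definitions of ys, yss, κs
  have Hy : ∀ t, HasDerivAt y (‖deriv x t‖ • ys t) t := by
    intro t
    have : ‖deriv x t‖ • ys t = deriv y t := by rw [hys t, smul_inv_smul₀ (hNne t)]
    rw [this]; exact (hyc.differentiable hle t).hasDerivAt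
  have Hys : ∀ t, HasDerivAt ys (‖deriv x t‖ • yss t) t := by
    intro t
    have : ‖deriv x t‖ • yss t = deriv ys t := by rw [hyss t, smul_inv_smul₀ (hNne t)]
    rw [this]; exact (hysc.differentiable hle t).hasDerivAt
  have Hκd : ∀ t, HasDerivAt κ (‖deriv x t‖ • κs t) t := by
    intro t
    have : ‖deriv x t‖ • κs t = deriv κ t := by rw [hκs t, smul_inv_smul₀ (hNne t)]
    rw [this]; exact (hκc.differentiable hle t).hasDerivAt
  -- scalar identities
  have hττ : ∀ t, ⟪τ t, τ t⟫ = 1 := by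
    intro t
    rw [hτ t, real_inner_smul_left, real_inner_smul_right, real_inner_self_eq_norm_sq]
    field_simp [hNne t]
  have hτκ : ∀ t, ⟪τ t, κ t⟫ = 0 := by
    intro t
    rw [hκ t, inner_sub_right, real_inner_smul_right, hττ t]
    ring
  -- formula for κs
  have hκs_eq : ∀ t, κs t = ys t - (⟪κ t, y t⟫ + ⟪τ t, ys t⟫) • τ t - ⟪τ t, y t⟫ • κ t := by
    intro t
    have h := (Hy t).sub ((HasDerivAt.inner ℝ (Hτd t) (Hy t)).smul (Hτd t))
    have h' := h.congr_of_eventuallyEq (Filter.Eventually.of_forall hκ)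
    rw [hκs t, h'.deriv]
    simp only [real_inner_smul_left, real_inner_smul_right]
    match_scalars <;> field_simp [hNne t] <;> ring
  -- formula for nsκ
  have hnsκ_eq : ∀ t, nsκ t = ys t - ⟪τ t, ys t⟫ • τ t - ⟪τ t, y t⟫ • κ t := by
    intro t
    rw [hnsκ t, hκs_eq t]
    simp only [inner_sub_right, real_inner_smul_right, hττ t, hτκ t, mul_one, mul_zero]
    module
  -- main computation
  intro ρ
  have h := ((Hys ρ).sub ((HasDerivAt.inner ℝ (Hτd ρ) (Hys ρ)).smul (Hτd ρ))).sub
    ((HasDerivAt.inner ℝ (Hτd ρ) (Hy ρ)).smul (Hκd ρ))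
  have h' := h.congr_of_eventuallyEq (Filter.Eventually.of_forall hnsκ_eq)
  rw [hns2κ ρ, hnsκs ρ, h'.deriv, hκs_eq ρ, hκ ρ, ← real_inner_self_eq_norm_sq]
  simp only [inner_sub_left, inner_sub_right, inner_add_left, inner_add_right,
    real_inner_smul_left, real_inner_smul_right, hττ ρ,
    real_inner_comm (y ρ) (τ ρ), real_inner_comm (ys ρ) (τ ρ),
    real_inner_comm (yss ρ) (τ ρ), real_inner_comm (ys ρ) (y ρ)]
  match_scalars <;> field_simp [hNne ρ] <;> ring
end

section
/- Let (x_h, y_h) be a solution of the semidiscrete curve diffusion scheme on [0,T]. Then for every t, ½ d/dt ∫_I |x_{h,ρ}|² dρ = −∫_I |y_{h,ρ} + |y_h|² x_{h,ρ}|² dρ ≤ 0. -/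
open MeasureTheory intervalIntegral
open scoped RealInnerProductSpace

lemma key_deriv_under_integral {f D : ℝ → ℝ → ℝ}
    (hD : Continuous fun p : ℝ × ℝ => D p.1 p.2)
    (hf_cont : ∀ s, Continuous fun ρ => f ρ s)
    (hderiv : ∀ ρ s, HasDerivAt (fun s' => f ρ s') (D ρ s) s) (t : ℝ) :
    HasDerivAt (fun s => ∫ ρ in (0:ℝ)..1, f ρ s) (∫ ρ in (0:ℝ)..1, D ρ t) t := by
  obtain ⟨C, hC⟩ : ∃ C, ∀ p ∈ Set.Icc (0:ℝ) 1 ×ˢ Set.Icc (t-1) (t+1), ‖D p.1 p.2‖ ≤ C :=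
    (isCompact_Icc.prod isCompact_Icc).exists_bound_of_continuousOn hD.continuousOn
  have main := intervalIntegral.hasDerivAt_integral_of_dominated_loc_of_deriv_le
    (F := fun s ρ => f ρ s) (F' := fun s ρ => D ρ s) (x₀ := t) (μ := volume) (a := 0) (b := 1)
    (bound := fun _ => C) (s := Metric.ball t 1) (Metric.ball_mem_nhds t one_pos)
    (Filter.Eventually.of_forall fun s => (hf_cont s).aestronglyMeasurable)
    ((hf_cont t).intervalIntegrable 0 1)
    ((hD.comp (continuous_id.prodMk continuous_const)).aestronglyMeasurable)
    ?_ intervalIntegrable_const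
    (Filter.Eventually.of_forall fun ρ _ s _ => hderiv ρ s)
  · exact main.2
  · refine Filter.Eventually.of_forall fun ρ hρ s hs => hC (ρ, s) ?_
    have hρ' : ρ ∈ Set.Ioc (0:ℝ) 1 := by simpa [Set.uIoc_of_le zero_le_one] using hρ
    have hs' : s ∈ Set.Ioo (t-1) (t+1) := by simpa [Real.ball_eq_Ioo] using hs
    exact ⟨Set.Ioc_subset_Icc_self hρ', Set.Ioo_subset_Icc_self hs'⟩

/-- slice derivative in the first variable -/
lemma slice_fst {d : ℕ} {F : ℝ × ℝ → EuclideanSpace ℝ (Fin d)}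
    (hF : Differentiable ℝ F) (ρ s : ℝ) :
    HasDerivAt (fun σ => F (σ, s)) (fderiv ℝ F (ρ, s) (1, 0)) ρ := by
  have h2 : HasDerivAt (fun σ : ℝ => (σ, s)) ((1:ℝ), (0:ℝ)) ρ :=
    (hasDerivAt_id ρ).prodMk (hasDerivAt_const ρ s)
  exact (hF (ρ, s)).hasFDerivAt.comp_hasDerivAt ρ h2

lemma slice_snd {d : ℕ} {F : ℝ × ℝ → EuclideanSpace ℝ (Fin d)}
    (hF : Differentiable ℝ F) (ρ s : ℝ) :
    HasDerivAt (fun s' => F (ρ, s')) (fderiv ℝ F (ρ, s) (0, 1)) s := by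
  have h2 : HasDerivAt (fun s' : ℝ => (ρ, s')) ((0:ℝ), (1:ℝ)) s :=
    (hasDerivAt_const s ρ).prodMk (hasDerivAt_id s)
  exact (hF (ρ, s)).hasFDerivAt.comp_hasDerivAt s h2


/-- Stability of the semidiscrete curve diffusion scheme: for a solution
`(x_h, y_h)` (with values in the finite element space modelled by the
predicate `Vh`) one has, for every `t`,
`½ d/dt ∫_I |x_{h,ρ}|² dρ = −∫_I |y_{h,ρ} + |y_h|² x_{h,ρ}|² dρ ≤ 0`. -/
theorem stmt17 (d : ℕ)
    (Vh : (ℝ → EuclideanSpace ℝ (Fin d)) → Prop)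
    (xh yh xρ yρ xt : ℝ → ℝ → EuclideanSpace ℝ (Fin d))
    (hxsm : ContDiff ℝ (⊤ : ℕ∞) (fun p : ℝ × ℝ => xh p.1 p.2))
    (hysm : ContDiff ℝ (⊤ : ℕ∞) (fun p : ℝ × ℝ => yh p.1 p.2))
    (hxρ : ∀ ρ t, xρ ρ t = deriv (fun σ => xh σ t) ρ)
    (hyρ : ∀ ρ t, yρ ρ t = deriv (fun σ => yh σ t) ρ)
    (hxt : ∀ ρ t, xt ρ t = deriv (fun s => xh ρ s) t)
    (hVx : ∀ t, Vh (fun ρ => xh ρ t))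
    (hVy : ∀ t, Vh (fun ρ => yh ρ t))
    (hVxt : ∀ t, Vh (fun ρ => xt ρ t))
    -- the scheme: first equation, with F_cd(a,b,c) = F₁ + F₂
    (heqa : ∀ t χ, Vh χ →
      (∫ ρ in (0:ℝ)..1, ⟪xt ρ t, χ ρ⟫ * ‖xρ ρ t‖ ^ 2)
        - (∫ ρ in (0:ℝ)..1, ⟪yρ ρ t, deriv χ ρ⟫)
      = ∫ ρ in (0:ℝ)..1,
          ⟪(2 * ⟪xρ ρ t, yρ ρ t⟫ + ‖xρ ρ t‖ ^ 2 * ‖yh ρ t‖ ^ 2) • yh ρ t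
            + (2:ℝ) • (⟪xρ ρ t, yh ρ t⟫ • yρ ρ t - ⟪yρ ρ t, yh ρ t⟫ • xρ ρ t)
            + (2 * ⟪xρ ρ t, yh ρ t⟫) •
                (‖yh ρ t‖ ^ 2 • xρ ρ t - ⟪xρ ρ t, yh ρ t⟫ • yh ρ t), χ ρ⟫)
    -- the scheme: second equation
    (heqb : ∀ t η, Vh η →
      (∫ ρ in (0:ℝ)..1, ⟪yh ρ t, η ρ⟫ * ‖xρ ρ t‖ ^ 2)
        + (∫ ρ in (0:ℝ)..1, ⟪xρ ρ t, deriv η ρ⟫) = 0) :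
    ∀ t, HasDerivAt (fun s => (1/2) * ∫ ρ in (0:ℝ)..1, ‖xρ ρ s‖ ^ 2)
        (-∫ ρ in (0:ℝ)..1, ‖yρ ρ t + ‖yh ρ t‖ ^ 2 • xρ ρ t‖ ^ 2) t ∧
      (-∫ ρ in (0:ℝ)..1, ‖yρ ρ t + ‖yh ρ t‖ ^ 2 • xρ ρ t‖ ^ 2) ≤ 0 := by
  intro t
  -- smoothness bookkeeping
  set Fx : ℝ × ℝ → EuclideanSpace ℝ (Fin d) := fun p => xh p.1 p.2 with hFxdef
  set Fy : ℝ × ℝ → EuclideanSpace ℝ (Fin d) := fun p => yh p.1 p.2 with hFydef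
  have hFxd : Differentiable ℝ Fx := hxsm.differentiable (by simp)
  have hFyd : Differentiable ℝ Fy := hysm.differentiable (by simp)
  set G : ℝ × ℝ → (ℝ × ℝ) →L[ℝ] EuclideanSpace ℝ (Fin d) := fderiv ℝ Fx with hGdef
  set Gy : ℝ × ℝ → (ℝ × ℝ) →L[ℝ] EuclideanSpace ℝ (Fin d) := fderiv ℝ Fy with hGydef
  have hGsm : ContDiff ℝ (⊤ : ℕ∞) G := hxsm.fderiv_right (mod_cast le_top)
  have hGysm : ContDiff ℝ (⊤ : ℕ∞) Gy := hysm.fderiv_right (mod_cast le_top)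
  have hGd : Differentiable ℝ G := hGsm.differentiable (by simp)
  have hG2 : Continuous (fderiv ℝ G) := (hGsm.fderiv_right (m := 0) (by exact_mod_cast le_top)).continuous
  -- identifications of xρ, yρ, xt
  have hxρ' : ∀ ρ s, xρ ρ s = G (ρ, s) (1, 0) := fun ρ s =>
    (hxρ ρ s).trans (slice_fst hFxd ρ s).deriv
  have hyρ' : ∀ ρ s, yρ ρ s = Gy (ρ, s) (1, 0) := fun ρ s =>
    (hyρ ρ s).trans (slice_fst hFyd ρ s).deriv
  have hxt' : ∀ ρ s, xt ρ s = G (ρ, s) (0, 1) := fun ρ s =>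
    (hxt ρ s).trans (slice_snd hFxd ρ s).deriv
  -- mixed second derivative
  set W : ℝ → ℝ → EuclideanSpace ℝ (Fin d) :=
    fun ρ s => fderiv ℝ G (ρ, s) ((0:ℝ), (1:ℝ)) ((1:ℝ), (0:ℝ)) with hWdef
  -- W is the time derivative of xρ
  have hW : ∀ ρ s, HasDerivAt (fun s' => xρ ρ s') (W ρ s) s := by
    intro ρ s
    have h3 : HasDerivAt (fun s' => G (ρ, s')) (fderiv ℝ G (ρ, s) (0, 1)) s := by
      have h2 : HasDerivAt (fun s' : ℝ => (ρ, s')) ((0:ℝ), (1:ℝ)) s :=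
        (hasDerivAt_const s ρ).prodMk (hasDerivAt_id s)
      exact (hGd (ρ, s)).hasFDerivAt.comp_hasDerivAt s h2
    have h4 := h3.clm_apply (hasDerivAt_const s (((1:ℝ), (0:ℝ)) : ℝ × ℝ))
    simp only [add_zero, map_zero] at h4
    have : (fun s' => xρ ρ s') = fun s' => G (ρ, s') (1, 0) := funext fun s' => hxρ' ρ s'
    rw [this]
    exact h4
  -- W is also the space derivative of xt (symmetry of second derivatives)
  have hχderiv : ∀ ρ, deriv (fun σ => xt σ t) ρ = W ρ t := by
    intro ρ
    have h3 : HasDerivAt (fun σ => G (σ, t)) (fderiv ℝ G (ρ, t) (1, 0)) ρ := by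
      have h2 : HasDerivAt (fun σ : ℝ => (σ, t)) ((1:ℝ), (0:ℝ)) ρ :=
        (hasDerivAt_id ρ).prodMk (hasDerivAt_const ρ t)
      exact (hGd (ρ, t)).hasFDerivAt.comp_hasDerivAt ρ h2
    have h4 := h3.clm_apply (hasDerivAt_const ρ (((0:ℝ), (1:ℝ)) : ℝ × ℝ))
    simp only [add_zero, map_zero] at h4
    have hsym : fderiv ℝ G (ρ, t) (1, 0) (0, 1) = fderiv ℝ G (ρ, t) (0, 1) (1, 0) :=
      second_derivative_symmetric (fun y => (hFxd y).hasFDerivAt)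
        ((hGd (ρ, t)).hasFDerivAt) _ _
    have : (fun σ => xt σ t) = fun σ => G (σ, t) (0, 1) := funext fun σ => hxt' σ t
    rw [this, h4.deriv, hsym]
  -- continuity facts
  have cxρ : Continuous fun p : ℝ × ℝ => xρ p.1 p.2 := by
    have : (fun p : ℝ × ℝ => xρ p.1 p.2) = fun p => G p (1, 0) :=
      funext fun p => hxρ' p.1 p.2
    rw [this]; exact hGsm.continuous.clm_apply continuous_const
  have cyρt : Continuous fun ρ => yρ ρ t := by
    have : (fun ρ => yρ ρ t) = fun ρ => Gy (ρ, t) (1, 0) := funext fun ρ => hyρ' ρ t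
    rw [this]
    exact (hGysm.continuous.comp (continuous_id.prodMk continuous_const)).clm_apply
      continuous_const
  have cxρt : Continuous fun ρ => xρ ρ t :=
    cxρ.comp (continuous_id.prodMk continuous_const)
  have cxt : Continuous fun ρ => xt ρ t := by
    have : (fun ρ => xt ρ t) = fun ρ => G (ρ, t) (0, 1) := funext fun ρ => hxt' ρ t
    rw [this]
    exact (hGsm.continuous.comp (continuous_id.prodMk continuous_const)).clm_apply
      continuous_const
  have cyh : Continuous fun ρ => yh ρ t :=
    hysm.continuous.comp (continuous_id.prodMk continuous_const)
  have cW : Continuous fun p : ℝ × ℝ => W p.1 p.2 := by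
    exact (hG2.clm_apply continuous_const).clm_apply continuous_const
  have cWt : Continuous fun ρ => W ρ t :=
    cW.comp (continuous_id.prodMk continuous_const)
  -- derivative of the energy integrand
  have hED : ∀ ρ s, HasDerivAt (fun s' => ‖xρ ρ s'‖ ^ 2)
      (2 * ⟪W ρ s, xρ ρ s⟫) s := by
    intro ρ s
    have h := (hW ρ s).inner ℝ (hW ρ s)
    have heq : (fun s' => ‖xρ ρ s'‖ ^ 2) = fun s' => ⟪xρ ρ s', xρ ρ s'⟫ :=
      funext fun s' => (real_inner_self_eq_norm_sq _).symm
    rw [heq]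
    refine h.congr_deriv ?_
    rw [real_inner_comm (xρ ρ s) (W ρ s)]; ring
  -- differentiate under the integral
  have hmain : HasDerivAt (fun s => ∫ ρ in (0:ℝ)..1, ‖xρ ρ s‖ ^ 2)
      (∫ ρ in (0:ℝ)..1, 2 * ⟪W ρ t, xρ ρ t⟫) t := by
    refine key_deriv_under_integral ?_ ?_ hED t
    · exact continuous_const.mul (cW.inner cxρ)
    · intro s
      exact ((cxρ.comp (continuous_id.prodMk continuous_const)).norm).pow 2
  have hmain2 : HasDerivAt (fun s => (1/2) * ∫ ρ in (0:ℝ)..1, ‖xρ ρ s‖ ^ 2)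
      ((1/2) * ∫ ρ in (0:ℝ)..1, 2 * ⟪W ρ t, xρ ρ t⟫) t := hmain.const_mul (1/2)
  -- the energy identity
  have key : (1/2) * (∫ ρ in (0:ℝ)..1, 2 * ⟪W ρ t, xρ ρ t⟫)
      = -∫ ρ in (0:ℝ)..1, ‖yρ ρ t + ‖yh ρ t‖ ^ 2 • xρ ρ t‖ ^ 2 := by
    -- equation (b) with test function xt
    have E1 := heqb t (fun ρ => xt ρ t) (hVxt t)
    simp only [hχderiv] at E1
    -- equation (a) with test function yh
    have E2 := heqa t (fun ρ => yh ρ t) (hVy t)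
    simp only [← hyρ] at E2
    -- pointwise identity for the RHS of (a)
    have hptA : ∀ ρ,
        ⟪(2 * ⟪xρ ρ t, yρ ρ t⟫ + ‖xρ ρ t‖ ^ 2 * ‖yh ρ t‖ ^ 2) • yh ρ t
          + (2:ℝ) • (⟪xρ ρ t, yh ρ t⟫ • yρ ρ t - ⟪yρ ρ t, yh ρ t⟫ • xρ ρ t)
          + (2 * ⟪xρ ρ t, yh ρ t⟫) •
              (‖yh ρ t‖ ^ 2 • xρ ρ t - ⟪xρ ρ t, yh ρ t⟫ • yh ρ t), yh ρ t⟫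
        = 2 * ⟪xρ ρ t, yρ ρ t⟫ * ‖yh ρ t‖ ^ 2 + ‖xρ ρ t‖ ^ 2 * ‖yh ρ t‖ ^ 4 := by
      intro ρ
      simp only [inner_add_left, inner_smul_left, inner_sub_left, conj_trivial,
        real_inner_self_eq_norm_sq]
      ring
    rw [show (∫ ρ in (0:ℝ)..1,
        ⟪(2 * ⟪xρ ρ t, yρ ρ t⟫ + ‖xρ ρ t‖ ^ 2 * ‖yh ρ t‖ ^ 2) • yh ρ t
          + (2:ℝ) • (⟪xρ ρ t, yh ρ t⟫ • yρ ρ t - ⟪yρ ρ t, yh ρ t⟫ • xρ ρ t)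
          + (2 * ⟪xρ ρ t, yh ρ t⟫) •
              (‖yh ρ t‖ ^ 2 • xρ ρ t - ⟪xρ ρ t, yh ρ t⟫ • yh ρ t), yh ρ t⟫)
        = ∫ ρ in (0:ℝ)..1,
            (2 * ⟪xρ ρ t, yρ ρ t⟫ * ‖yh ρ t‖ ^ 2 + ‖xρ ρ t‖ ^ 2 * ‖yh ρ t‖ ^ 4)
      from intervalIntegral.integral_congr fun ρ _ => hptA ρ] at E2
    -- pointwise identity for the norm square
    have hptB : ∀ ρ, ‖yρ ρ t + ‖yh ρ t‖ ^ 2 • xρ ρ t‖ ^ 2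
        = ⟪yρ ρ t, yρ ρ t⟫
          + (2 * ⟪xρ ρ t, yρ ρ t⟫ * ‖yh ρ t‖ ^ 2 + ‖xρ ρ t‖ ^ 2 * ‖yh ρ t‖ ^ 4) := by
      intro ρ
      rw [norm_add_sq_real, real_inner_smul_right, norm_smul,
        real_inner_comm (yρ ρ t) (xρ ρ t), real_inner_self_eq_norm_sq]
      simp [mul_pow, abs_of_nonneg (sq_nonneg (‖yh ρ t‖))]
      ring
    -- integrability
    have i1 : IntervalIntegrable (fun ρ => ⟪yρ ρ t, yρ ρ t⟫) volume 0 1 :=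
      (cyρt.inner cyρt).intervalIntegrable 0 1
    have i2 : IntervalIntegrable
        (fun ρ => 2 * ⟪xρ ρ t, yρ ρ t⟫ * ‖yh ρ t‖ ^ 2 + ‖xρ ρ t‖ ^ 2 * ‖yh ρ t‖ ^ 4)
        volume 0 1 := by
      apply Continuous.intervalIntegrable
      exact ((continuous_const.mul (cxρt.inner cyρt)).mul ((cyh.norm).pow 2)).add
        (((cxρt.norm).pow 2).mul ((cyh.norm).pow 4))
    have hsum : (∫ ρ in (0:ℝ)..1, ⟪yρ ρ t, yρ ρ t⟫)
        + (∫ ρ in (0:ℝ)..1,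
            (2 * ⟪xρ ρ t, yρ ρ t⟫ * ‖yh ρ t‖ ^ 2 + ‖xρ ρ t‖ ^ 2 * ‖yh ρ t‖ ^ 4))
        = ∫ ρ in (0:ℝ)..1, ‖yρ ρ t + ‖yh ρ t‖ ^ 2 • xρ ρ t‖ ^ 2 := by
      rw [← intervalIntegral.integral_add i1 i2]
      exact intervalIntegral.integral_congr fun ρ _ => (hptB ρ).symm
    -- the ∫⟪xt, yh⟫ term equals the ∫⟪yh, xt⟫ term
    have hcomm : (∫ ρ in (0:ℝ)..1, ⟪xt ρ t, yh ρ t⟫ * ‖xρ ρ t‖ ^ 2)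
        = ∫ ρ in (0:ℝ)..1, ⟪yh ρ t, xt ρ t⟫ * ‖xρ ρ t‖ ^ 2 :=
      intervalIntegral.integral_congr fun ρ _ => by rw [real_inner_comm]
    -- ∫ 2⟪W, xρ⟫ = 2 ∫ ⟪xρ, W⟫
    have hWxρ : (∫ ρ in (0:ℝ)..1, 2 * ⟪W ρ t, xρ ρ t⟫)
        = 2 * ∫ ρ in (0:ℝ)..1, ⟪xρ ρ t, W ρ t⟫ := by
      rw [← intervalIntegral.integral_const_mul]
      exact intervalIntegral.integral_congr fun ρ _ => by rw [real_inner_comm]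
    rw [hWxρ]
    rw [hcomm] at E2
    -- combine: E1 : A + B = 0, E2 : A - C = R, hsum : C + R = N
    -- goal : (1/2) * (2 * B) = -N
    have : (∫ ρ in (0:ℝ)..1, ⟪xρ ρ t, W ρ t⟫)
        = -∫ ρ in (0:ℝ)..1, ‖yρ ρ t + ‖yh ρ t‖ ^ 2 • xρ ρ t‖ ^ 2 := by
      rw [← hsum]; linarith
    rw [this]; ring
  refine ⟨key ▸ hmain2, ?_⟩
  have : (0:ℝ) ≤ ∫ ρ in (0:ℝ)..1, ‖yρ ρ t + ‖yh ρ t‖ ^ 2 • xρ ρ t‖ ^ 2 :=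
    intervalIntegral.integral_nonneg zero_le_one fun u _ => by positivity
  linarith
end
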